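/- arXiv:1905.11853 — 2 statements merged into one kernel-verified Lean document; each statement's English description precedes it below -/
import Mathlib

section
/- Let d₁, d₂ ≥ 1 be natural numbers and let Q₁, Q₂ : Fin 5 → ℂ[t] be vectors of polynomials with natDegree(Q₁ i) ≤ d₁ and natDegree(Q₂ i) ≤ d₂ for all i. For t₀ ∈ ℂ let M(t₀) denote the 5×4 complex matrix whose four columns are the entrywise evaluations at t₀ of Q₁, Q₂, Q₁' and Q₂' (where ' denotes the derivative). Suppose there exists t* ∈ ℂ such that M(t*) has rank 4, and there exists a finite set T ⊆ ℂ with card(T) ≥ 2(d₁ + d₂) − 4 such that M(t₀) has rank at most 3 for every t₀ ∈ T. Then there exists a nonzero vector λ ∈ ℂ⁵ with Σᵢ λᵢ·(Q₁ i) = 0 and Σᵢ λᵢ·(Q₂ i) = 0 as polynomials. -/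
/-! Let `A` be the polynomial matrix with columns `Q₁, Q₂, Q₁', Q₂'`. Replacing the derivative
columns by `t·Qⱼ' − dⱼ·Qⱼ`, whose leading terms cancel so that they have degree at most `dⱼ − 1`,
multiplies each maximal minor `Dᵢ` of `A` by `t²`; hence `deg Dᵢ ≤ 2(d₁ + d₂) − 4`. Every `Dᵢ`
vanishes on `T`, so `Dᵢ = cᵢ·∏_{τ ∈ T} (t − τ)`. Cancelling this common factor from the Laplace
expansions `∑ᵢ (−1)ⁱ Aᵢⱼ Dᵢ = 0` shows that `λᵢ = (−1)ⁱ cᵢ` annihilates every column of `A`, and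
`λ ≠ 0` because some minor of `A` is nonzero at the point of full rank. -/

open Polynomial

namespace Matrix

variable {R : Type*} [CommRing R] {n : ℕ}

theorem det_of_cons_col (u : Fin (n + 1) → R) (N : Matrix (Fin (n + 1)) (Fin n) R) :
    (of fun k => Fin.cons (u k) (N k) : Matrix (Fin (n + 1)) (Fin (n + 1)) R).det =
      ∑ i : Fin (n + 1), (-1) ^ (i : ℕ) * u i * (N.submatrix i.succAbove id).det := by
  rw [det_succ_column_zero]
  rfl

theorem sum_mul_det_submatrix_succAbove_eq_zero (N : Matrix (Fin (n + 1)) (Fin n) R)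
    (j : Fin n) :
    ∑ i : Fin (n + 1), (-1) ^ (i : ℕ) * N i j * (N.submatrix i.succAbove id).det = 0 := by
  rw [← det_of_cons_col]
  exact det_zero_of_column_eq (Fin.succ_ne_zero j).symm fun k => rfl

theorem sum_mul_eq_zero_of_det_submatrix_succAbove_eq_mul [IsDomain R]
    (N : Matrix (Fin (n + 1)) (Fin n) R) {c : Fin (n + 1) → R} {P : R} (hP : P ≠ 0)
    (hc : ∀ i, (N.submatrix i.succAbove id).det = c i * P) (j : Fin n) :
    ∑ i : Fin (n + 1), (-1) ^ (i : ℕ) * c i * N i j = 0 := by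
  refine mul_right_cancel₀ hP ?_
  rw [zero_mul, Finset.sum_mul, ← sum_mul_det_submatrix_succAbove_eq_zero N j]
  refine Finset.sum_congr rfl fun i _ => ?_
  rw [hc]
  ring

theorem rank_eq_iff_exists_det_submatrix_succAbove_ne_zero {K : Type*} [Field K]
    (N : Matrix (Fin (n + 1)) (Fin n) K) :
    N.rank = n ↔ ∃ i : Fin (n + 1), (N.submatrix i.succAbove id).det ≠ 0 := by
  constructor
  -- Completing the independent columns by a vector outside their span gives an invertible
  -- matrix, whose Laplace expansion along the new column involves only the maximal minors.
  · intro hrank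
    have hindep : LinearIndependent K N.col := by
      rw [linearIndependent_iff_card_eq_finrank_span, Fintype.card_fin, Set.finrank,
        ← rank_eq_finrank_span_cols, hrank]
    obtain ⟨u, hu⟩ : ∃ u, u ∉ Submodule.span K (Set.range N.col) := by
      by_contra! hspan
      have := Submodule.finrank_mono (fun u _ => hspan u : (⊤ : Submodule K _) ≤ _)
      rw [finrank_top, ← rank_eq_finrank_span_cols, hrank, Module.finrank_fin_fun] at this
      omega
    have hunit : IsUnit (of fun k => Fin.cons (u k) (N k) : Matrix (Fin (n + 1)) _ K) := by
      have hcols : (of fun k => Fin.cons (u k) (N k) : Matrix (Fin (n + 1)) _ K).col =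
          Fin.cons u N.col := by
        ext l k
        exact Fin.cases rfl (fun _ => rfl) l
      rw [← linearIndependent_cols_iff_isUnit, hcols]
      exact linearIndependent_finCons.2 ⟨hindep, hu⟩
    by_contra! hminors
    rw [isUnit_iff_isUnit_det, det_of_cons_col] at hunit
    simp [hminors] at hunit
  · rintro ⟨i, hi⟩
    refine le_antisymm N.rank_le_width ?_
    calc n = (N.submatrix i.succAbove id).rank := by
          rw [rank_of_isUnit _ ((isUnit_iff_isUnit_det _).2 hi.isUnit), Fintype.card_fin]
      _ ≤ N.rank := rank_submatrix_le _ _ _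

end Matrix

namespace Polynomial

variable {R : Type*} [CommRing R]

theorem natDegree_X_mul_derivative_sub_C_mul_le {p : R[X]} {d : ℕ} (hp : p.natDegree ≤ d) :
    (X * derivative p - C (d : R) * p).natDegree ≤ d - 1 := by
  rw [natDegree_le_iff_coeff_eq_zero]
  intro N hN
  obtain ⟨m, rfl⟩ : ∃ m, N = m + 1 := ⟨N - 1, by omega⟩
  rw [coeff_sub, coeff_X_mul, coeff_derivative, coeff_C_mul]
  rcases (show d ≤ m + 1 by omega).eq_or_lt with rfl | hlt
  · push_cast
    ring
  · rw [coeff_eq_zero_of_natDegree_lt (hp.trans_lt hlt)]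
    ring

theorem natDegree_det_le_sum {ι : Type*} [Fintype ι] [DecidableEq ι]
    (N : Matrix ι ι R[X]) (b : ι → ℕ) (h : ∀ i j, (N i j).natDegree ≤ b j) :
    N.det.natDegree ≤ ∑ j, b j := by
  rw [Matrix.det_apply]
  refine natDegree_sum_le_of_forall_le _ _ fun σ _ => (natDegree_smul_le _ _).trans ?_
  exact (natDegree_prod_le _ _).trans (Finset.sum_le_sum fun j _ => h (σ j) j)

theorem exists_eq_C_mul_prod_X_sub_C [IsDomain R] {p : R[X]} {s : Finset R}
    (hs : ∀ x ∈ s, p.eval x = 0) (hdeg : p.natDegree ≤ s.card) :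
    ∃ c, p = C c * ∏ x ∈ s, (X - C x) := by
  rcases eq_or_ne p 0 with rfl | hp
  · exact ⟨0, by simp⟩
  have hdvd : ∏ x ∈ s, (X - C x) ∣ p := by
    refine (Multiset.prod_X_sub_C_dvd_iff_le_roots hp s.val).2 ?_
    rw [Multiset.le_iff_subset s.nodup]
    exact fun x hx => (mem_roots hp).2 (hs x hx)
  obtain ⟨q, rfl⟩ := hdvd
  have hq : q ≠ 0 := right_ne_zero_of_mul hp
  have hP : (∏ x ∈ s, (X - C x)).natDegree = s.card := natDegree_finsetProd_X_sub_C_eq_card s id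
  rw [natDegree_mul (left_ne_zero_of_mul hp) hq, hP] at hdeg
  refine ⟨q.coeff 0, ?_⟩
  rw [mul_comm, ← eq_C_of_natDegree_le_zero (by omega : q.natDegree ≤ 0)]

end Polynomial

section JetMatrix

variable {R : Type*} [CommRing R]

noncomputable def jetMatrix {ι : Type*} (p q : ι → R[X]) : Matrix ι (Fin 4) R[X] :=
  Matrix.of fun i => ![p i, q i, derivative (p i), derivative (q i)]

theorem natDegree_det_jetMatrix_le {d₁ d₂ : ℕ} (hd₁ : 1 ≤ d₁) (hd₂ : 1 ≤ d₂)
    {p q : Fin 4 → R[X]} (hp : ∀ k, (p k).natDegree ≤ d₁) (hq : ∀ k, (q k).natDegree ≤ d₂) :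
    (jetMatrix p q).det.natDegree ≤ 2 * (d₁ + d₂) - 4 := by
  nontriviality R
  set U : Matrix (Fin 4) (Fin 4) R[X] :=
    !![1, 0, -C (d₁ : R), 0; 0, 1, 0, -C (d₂ : R); 0, 0, X, 0; 0, 0, 0, X]
  have hU : U.det = X ^ 2 := by
    simp [U, Matrix.det_succ_row_zero, Fin.sum_univ_succ, sq]
  have hmul : jetMatrix p q * U = Matrix.of fun k => ![p k, q k,
      X * derivative (p k) - C (d₁ : R) * p k, X * derivative (q k) - C (d₂ : R) * q k] := by
    ext k j : 1
    fin_cases j <;> simp [U, jetMatrix, Matrix.mul_apply, Fin.sum_univ_four, -map_natCast] <;> ring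
  have hbound := natDegree_det_le_sum (jetMatrix p q * U) ![d₁, d₂, d₁ - 1, d₂ - 1] fun k j => by
    rw [hmul]
    fin_cases j
    exacts [hp k, hq k, natDegree_X_mul_derivative_sub_C_mul_le (hp k),
      natDegree_X_mul_derivative_sub_C_mul_le (hq k)]
  rcases eq_or_ne (jetMatrix p q).det 0 with h | h
  · simp [h]
  rw [Matrix.det_mul, hU, mul_comm, natDegree_X_pow_mul _ h, Fin.sum_univ_four] at hbound
  simp only [Matrix.cons_val] at hbound
  omega

end JetMatrix

/-- Coordinate form of the torsal-lines lemma: if the `5 × 4` matrix of evaluations of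
`Q₁, Q₂, Q₁', Q₂'` has rank `4` at some point, but rank at most `3` at each of at least
`2(d₁ + d₂) − 4` points, then there is a nonzero linear relation `λ` annihilating both
`Q₁` and `Q₂` identically. -/
theorem stmt_0 (d₁ d₂ : ℕ) (h₁ : 1 ≤ d₁) (h₂ : 1 ≤ d₂)
    (Q₁ Q₂ : Fin 5 → Polynomial ℂ)
    (hQ₁ : ∀ i, (Q₁ i).natDegree ≤ d₁) (hQ₂ : ∀ i, (Q₂ i).natDegree ≤ d₂)
    (M : ℂ → Matrix (Fin 5) (Fin 4) ℂ)
    (hM : ∀ t₀ : ℂ, M t₀ = Matrix.of fun i =>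
      ![(Q₁ i).eval t₀, (Q₂ i).eval t₀,
        ((derivative (Q₁ i))).eval t₀, ((derivative (Q₂ i))).eval t₀])
    (hfull : ∃ tstar : ℂ, (M tstar).rank = 4)
    (T : Finset ℂ) (hTcard : 2 * (d₁ + d₂) - 4 ≤ T.card)
    (hTrank : ∀ t₀ ∈ T, (M t₀).rank ≤ 3) :
    ∃ lam : Fin 5 → ℂ, lam ≠ 0 ∧
      (∑ i, C (lam i) * Q₁ i) = 0 ∧ (∑ i, C (lam i) * Q₂ i) = 0 := by
  set A := jetMatrix Q₁ Q₂
  have eval_minor (t : ℂ) (i : Fin 5) :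
      (A.submatrix i.succAbove id).det.eval t = ((M t).submatrix i.succAbove id).det := by
    rw [← coe_evalRingHom, RingHom.map_det, hM]
    congr 1
    ext k j
    fin_cases j <;> rfl
  have minor_eq (i : Fin 5) :
      ∃ c, (A.submatrix i.succAbove id).det = C c * ∏ τ ∈ T, (X - C τ) := by
    refine exists_eq_C_mul_prod_X_sub_C (fun t ht => ?_)
      ((natDegree_det_jetMatrix_le h₁ h₂ (fun _ => hQ₁ _) (fun _ => hQ₂ _)).trans hTcard)
    by_contra hne
    have hrank := (Matrix.rank_eq_iff_exists_det_submatrix_succAbove_ne_zero (M t)).2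
      ⟨i, eval_minor t i ▸ hne⟩
    have := hTrank t ht
    omega
  choose c hc using minor_eq
  obtain ⟨tstar, hstar⟩ := hfull
  obtain ⟨i₀, hi₀⟩ := (Matrix.rank_eq_iff_exists_det_submatrix_succAbove_ne_zero _).1 hstar
  have relation := A.sum_mul_eq_zero_of_det_submatrix_succAbove_eq_mul
    (Finset.prod_ne_zero_iff.2 fun τ _ => X_sub_C_ne_zero τ) hc
  refine ⟨fun i => (-1) ^ (i : ℕ) * c i, fun h => hi₀ ?_, ?_, ?_⟩
  · have : c i₀ = 0 := by simpa using congrFun h i₀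
    rw [← eval_minor, hc, this, C_0, zero_mul, eval_zero]
  · simpa [A, jetMatrix] using relation 0
  · simpa [A, jetMatrix] using relation 1
end

section
/- Let d₁, d₂ ≥ 1 be natural numbers and let Q₁, Q₂ : Fin 5 → ℂ[t] be vectors of polynomials with natDegree(Q₁ i) ≤ d₁ and natDegree(Q₂ i) ≤ d₂ for all i. Let N be the 5×4 matrix over ℂ[t] whose four columns are Q₁, Q₂, Q₁' and Q₂' (where ' denotes the derivative). Then for every i : Fin 5, the determinant of the 4×4 submatrix of N obtained by deleting the i-th row is a polynomial of natDegree at most 2(d₁ + d₂) − 4. -/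
open Polynomial

lemma det_natDegree_le {n : ℕ} (M : Matrix (Fin n) (Fin n) (Polynomial ℂ))
    (b : Fin n → ℕ) (h : ∀ i j, (M i j).natDegree ≤ b j) :
    M.det.natDegree ≤ ∑ j, b j := by
  rw [Matrix.det_apply']
  apply natDegree_sum_le_of_forall_le
  intro σ _
  refine le_trans natDegree_mul_le ?_
  have h1 : (((Equiv.Perm.sign σ : ℤ) : Polynomial ℂ)).natDegree = 0 := natDegree_intCast _
  have h2 : (∏ i, M (σ i) i).natDegree ≤ ∑ i, b i :=
    (natDegree_prod_le _ _).trans (Finset.sum_le_sum fun i _ => h _ i)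
  omega

lemma key_deg (d : ℕ) (p : Polynomial ℂ) (hp : p.natDegree ≤ d) :
    (C (d : ℂ) * p - X * derivative p).natDegree ≤ d - 1 := by
  rw [natDegree_le_iff_coeff_eq_zero]
  intro m hm
  have hm' : d ≤ m := by omega
  obtain ⟨k, rfl⟩ : ∃ k, m = k + 1 := ⟨m - 1, by omega⟩
  rw [coeff_sub, coeff_C_mul, coeff_X_mul, coeff_derivative]
  rcases eq_or_lt_of_le hm' with h | h
  · subst h
    push_cast
    ring
  · have : p.coeff (k + 1) = 0 := coeff_eq_zero_of_natDegree_lt (by omega)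
    simp [this]

/-- The `4 × 4` minors (obtained by deleting one row) of the `5 × 4` polynomial matrix
with columns `Q₁, Q₂, Q₁', Q₂'` have degree at most `2(d₁ + d₂) − 4`. -/
theorem stmt_1 (d₁ d₂ : ℕ) (h₁ : 1 ≤ d₁) (h₂ : 1 ≤ d₂)
    (Q₁ Q₂ : Fin 5 → Polynomial ℂ)
    (hQ₁ : ∀ i, (Q₁ i).natDegree ≤ d₁) (hQ₂ : ∀ i, (Q₂ i).natDegree ≤ d₂)
    (N : Matrix (Fin 5) (Fin 4) (Polynomial ℂ))
    (hN : N = Matrix.of fun i =>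
      ![Q₁ i, Q₂ i, derivative (Q₁ i), derivative (Q₂ i)]) :
    ∀ i : Fin 5, ((N.submatrix i.succAbove id).det).natDegree ≤ 2 * (d₁ + d₂) - 4 := by
  intro i
  set A : Matrix (Fin 4) (Fin 4) (Polynomial ℂ) := N.submatrix i.succAbove id with hA
  -- column facts
  have hA0 : ∀ r, A r 0 = Q₁ (i.succAbove r) := by intro r; simp [hA, hN]
  have hA1 : ∀ r, A r 1 = Q₂ (i.succAbove r) := by intro r; simp [hA, hN]
  have hA2 : ∀ r, A r 2 = derivative (Q₁ (i.succAbove r)) := by intro r; simp [hA, hN]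
  have hA3 : ∀ r, A r 3 = derivative (Q₂ (i.succAbove r)) := by intro r; simp [hA, hN]
  set B : Matrix (Fin 4) (Fin 4) (Polynomial ℂ) :=
    A.updateCol 0 (fun r => C (d₁ : ℂ) * A r 0 - X * A r 2) with hB
  set M : Matrix (Fin 4) (Fin 4) (Polynomial ℂ) :=
    B.updateCol 1 (fun r => C (d₂ : ℂ) * B r 1 - X * B r 3) with hM
  have hBdet : B.det = C (d₁ : ℂ) * A.det := by
    have : (fun r => C (d₁ : ℂ) * A r 0 - X * A r 2)
        = ((C (d₁ : ℂ) • fun r => A r 0) + ((-X : Polynomial ℂ) • fun r => A r 2) : Fin 4 → Polynomial ℂ) := by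
      funext r; simp [smul_eq_mul]; ring
    rw [hB, this, Matrix.det_updateCol_add, Matrix.det_updateCol_smul,
      Matrix.det_updateCol_smul]
    have h02 : A.updateCol 0 (fun r => A r 0) = A := by
      apply Matrix.updateCol_eq_self
    have hz : (A.updateCol 0 (fun r => A r 2)).det = 0 :=
      Matrix.det_updateCol_eq_zero (by decide)
    rw [h02, hz]
    ring
  have hMdet : M.det = C (d₂ : ℂ) * B.det := by
    have : (fun r => C (d₂ : ℂ) * B r 1 - X * B r 3)
        = ((C (d₂ : ℂ) • fun r => B r 1) + ((-X : Polynomial ℂ) • fun r => B r 3) : Fin 4 → Polynomial ℂ) := by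
      funext r; simp [smul_eq_mul]; ring
    rw [hM, this, Matrix.det_updateCol_add, Matrix.det_updateCol_smul,
      Matrix.det_updateCol_smul]
    have h11 : B.updateCol 1 (fun r => B r 1) = B := by
      apply Matrix.updateCol_eq_self
    have hz : (B.updateCol 1 (fun r => B r 3)).det = 0 :=
      Matrix.det_updateCol_eq_zero (by decide)
    rw [h11, hz]
    ring
  -- entries of M
  have hMdeg : M.det.natDegree ≤ 2 * (d₁ + d₂) - 4 := by
    have hb : ∀ r j, (M r j).natDegree ≤ ![d₁ - 1, d₂ - 1, d₁ - 1, d₂ - 1] j := by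
      intro r j
      fin_cases j
      · have : M r 0 = C (d₁ : ℂ) * Q₁ (i.succAbove r) - X * derivative (Q₁ (i.succAbove r)) := by
          simp [hM, hB, Matrix.updateCol_apply, hA0, hA2]
        show (M r 0).natDegree ≤ d₁ - 1
        rw [this]; exact key_deg d₁ _ (hQ₁ _)
      · have : M r 1 = C (d₂ : ℂ) * Q₂ (i.succAbove r) - X * derivative (Q₂ (i.succAbove r)) := by
          simp [hM, hB, Matrix.updateCol_apply, hA1, hA3]
        show (M r 1).natDegree ≤ d₂ - 1
        rw [this]; exact key_deg d₂ _ (hQ₂ _)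
      · have : M r 2 = derivative (Q₁ (i.succAbove r)) := by
          simp [hM, hB, Matrix.updateCol_apply, hA2]
        show (M r 2).natDegree ≤ d₁ - 1
        rw [this]
        exact (natDegree_derivative_le _).trans (Nat.sub_le_sub_right (hQ₁ _) 1)
      · have : M r 3 = derivative (Q₂ (i.succAbove r)) := by
          simp [hM, hB, Matrix.updateCol_apply, hA3]
        show (M r 3).natDegree ≤ d₂ - 1
        rw [this]
        exact (natDegree_derivative_le _).trans (Nat.sub_le_sub_right (hQ₂ _) 1)
    calc M.det.natDegree ≤ ∑ j, ![d₁ - 1, d₂ - 1, d₁ - 1, d₂ - 1] j :=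
          det_natDegree_le M _ hb
      _ = 2 * (d₁ + d₂) - 4 := by
          simp [Fin.sum_univ_four]
          omega
  have hMA : M.det = C ((d₂ : ℂ) * d₁) * A.det := by
    rw [hMdet, hBdet, ← mul_assoc, ← C_mul]
  have hne : ((d₂ : ℂ) * d₁) ≠ 0 :=
    mul_ne_zero (Nat.cast_ne_zero.2 (by omega)) (Nat.cast_ne_zero.2 (by omega))
  have : M.det.natDegree = A.det.natDegree := by
    rw [hMA, natDegree_C_mul hne]
  omega
end
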